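/- For every integer n ≥ 0, b₁(n) − a₁(n) = c(n), where c(n) is the number of partitions of n in which exactly one part size occurs exactly three times and every other part size occurs exactly once. -/

import Mathlib

/-!
Statement 18: For every integer `n ≥ 0`, `b₁(n) − a₁(n) = c(n)`, where `a₁(n)` (resp.
`b₁(n)`) is the total number of cells of hook length 1 summed over all partitions of `n`
into odd (resp. distinct) parts, and `c(n)` is the number of partitions of `n` in which
exactly one part size occurs exactly three times and every other part size occurs exactly
once.  The difference is taken in `ℤ`.
-/

/-- `λ'_j`: the number of parts of `π` that are at least `j` (the conjugate partition). -/
def conjPart (π : Multiset ℕ) (j : ℕ) : ℕ := (π.filter (fun p => j ≤ p)).card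

/-- `λ_i`: the `i`-th largest part of `π` (1-indexed). -/
def rowPart (π : Multiset ℕ) (i : ℕ) : ℕ :=
  ((Finset.Icc 1 π.sum).filter (fun j => i ≤ conjPart π j)).card

/-- The number of cells of hook length `t` in the Young diagram of `π`:
cells `(i,j)` with `1 ≤ i`, `1 ≤ j ≤ λ_i` and `λ_i + λ'_j − i − j + 1 = t`. -/
def hookCount (π : Multiset ℕ) (t : ℕ) : ℕ :=
  (((Finset.Icc 1 π.sum) ×ˢ (Finset.Icc 1 π.sum)).filter
    (fun c => c.2 ≤ rowPart π c.1 ∧ rowPart π c.1 + conjPart π c.2 + 1 = t + c.1 + c.2)).card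

/-- `a₁(n)`: the total number of cells of hook length 1 summed over all partitions of `n`
into odd parts. -/
def a1 (n : ℕ) : ℕ :=
  ∑ π ∈ Nat.Partition.odds n, hookCount π.parts 1

/-- `b₁(n)`: the total number of cells of hook length 1 summed over all partitions of `n`
into distinct parts. -/
def b1 (n : ℕ) : ℕ :=
  ∑ π ∈ Nat.Partition.distincts n, hookCount π.parts 1

/-- `c(n)`: the number of partitions of `n` in which exactly one part size occurs exactly
three times while every other part size occurs exactly once. -/
def cBeck (n : ℕ) : ℕ :=
  ((Finset.univ : Finset (Nat.Partition n)).filter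
    (fun π => ∃ a ∈ π.parts.toFinset, π.parts.count a = 3 ∧
      ∀ b ∈ π.parts.toFinset, b ≠ a → π.parts.count b = 1)).card

/-!
A cell has hook length 1 exactly when it ends a row strictly longer than the next one, so for
a partition `π` the number of such cells is the number of distinct part sizes of `π`, and
`b₁(n)`, `a₁(n)` count the pairs `(π, k)` with `k` a part of `π`. Removing one part `k`
matches distinct partitions of `n` containing `k` with distinct partitions of `n - k` avoiding
`k`, and odd partitions of `n` containing an odd `k` with odd partitions of `n - k`, which
Euler's theorem counts as distinct ones; removing two copies of `k` matches the partitions of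
`n` in which only `k` repeats, three times, with distinct partitions of `n - 2k` containing `k`.
Writing `D m` for the number of distinct partitions of `m`, splitting according to whether `k`
is a part therefore collapses the `k`-th contribution to `b₁(n) - c(n)` to
`D (n - k) - D (n - 2k)`. The terms `D (n - 2k)` cancel the even `k` in `∑ₖ D (n - k)`, and
what remains, `∑_{k odd} D (n - k)`, is `a₁(n)`.
-/

open Finset Nat.Partition

section HookLength

variable {S : Multiset ℕ}

lemma conjPart_antitone : Antitone (conjPart S) := fun _ _ h =>
  Multiset.card_le_card (Multiset.monotone_filter_right S fun _ hp => h.trans hp)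

lemma conjPart_eq_count_add (S : Multiset ℕ) (j : ℕ) :
    conjPart S j = S.count j + conjPart S (j + 1) := by
  induction S using Multiset.induction_on with
  | empty => simp [conjPart]
  | cons a s ih =>
    simp only [conjPart, Multiset.filter_cons, Multiset.count_cons, apply_ite Multiset.card,
      Multiset.card_add, Multiset.card_singleton, Multiset.card_zero] at ih ⊢
    split_ifs <;> omega

lemma le_sum_of_le_conjPart {i j : ℕ} (hi : 1 ≤ i) (h : i ≤ conjPart S j) : j ≤ S.sum := by
  obtain ⟨p, hp⟩ := Multiset.card_pos_iff_exists_mem.mp (hi.trans h)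
  rw [Multiset.mem_filter] at hp
  exact hp.2.trans (Multiset.le_sum_of_mem hp.1)

lemma le_rowPart_iff {i j : ℕ} (hi : 1 ≤ i) (hj : 1 ≤ j) :
    j ≤ rowPart S i ↔ i ≤ conjPart S j := by
  constructor
  · intro h
    by_contra hlt
    have hsub : {j' ∈ Icc 1 S.sum | i ≤ conjPart S j'} ⊆ Icc 1 (j - 1) := by
      intro j' hj'
      simp only [mem_filter, mem_Icc] at hj' ⊢
      by_contra hj'j
      exact hlt (hj'.2.trans (conjPart_antitone (by omega)))
    have := card_le_card hsub
    simp only [Nat.card_Icc] at this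
    exact absurd h (by unfold rowPart; omega)
  · intro h
    have hsub : Icc 1 j ⊆ {j' ∈ Icc 1 S.sum | i ≤ conjPart S j'} := by
      intro j' hj'
      simp only [mem_filter, mem_Icc] at hj' ⊢
      exact ⟨⟨hj'.1, hj'.2.trans (le_sum_of_le_conjPart hi h)⟩,
        h.trans (conjPart_antitone hj'.2)⟩
    simpa [rowPart] using card_le_card hsub

lemma hook_eq_one_iff {i j : ℕ} (hi : 1 ≤ i) (hj : 1 ≤ j) :
    (j ≤ rowPart S i ∧ rowPart S i + conjPart S j = i + j) ↔ (j ∈ S ∧ conjPart S j = i) := by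
  have hsucc := conjPart_eq_count_add S j
  have hrow := le_rowPart_iff (S := S) hi hj
  have hrow_succ := le_rowPart_iff (S := S) (j := j + 1) hi (by omega)
  rw [← Multiset.count_pos]
  omega

lemma hookCount_one (hpos : ∀ p ∈ S, 0 < p) : hookCount S 1 = #S.toFinset := by
  have hcells : {c ∈ Icc 1 S.sum ×ˢ Icc 1 S.sum |
      c.2 ≤ rowPart S c.1 ∧ rowPart S c.1 + conjPart S c.2 + 1 = 1 + c.1 + c.2} =
      S.toFinset.image fun j => (conjPart S j, j) := by
    ext ⟨i, j⟩
    simp only [mem_filter, mem_product, mem_Icc, mem_image, Multiset.mem_toFinset, Prod.mk.injEq]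
    constructor
    · rintro ⟨⟨⟨hi, -⟩, hj, -⟩, hcell⟩
      obtain ⟨hjS, rfl⟩ := (hook_eq_one_iff hi hj).mp ⟨hcell.1, by omega⟩
      exact ⟨j, hjS, rfl, rfl⟩
    · rintro ⟨j, hjS, rfl, rfl⟩
      have hj := hpos j hjS
      have hcard : conjPart S j ≤ S.sum := (Multiset.card_le_card (Multiset.filter_le _ S)).trans
        (by simpa using Multiset.card_nsmul_le_sum hpos)
      have hi : 1 ≤ conjPart S j := by
        have := conjPart_eq_count_add S j
        have := Multiset.count_pos.mpr hjS
        omega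
      have hcell := (hook_eq_one_iff hi hj).mpr ⟨hjS, rfl⟩
      exact ⟨⟨⟨hi, hcard⟩, hj, Multiset.le_sum_of_mem hjS⟩, hcell.1, by omega⟩
  rw [hookCount, hcells, card_image_of_injective _ fun _ _ h => congrArg Prod.snd h]

end HookLength

def RepeatsOnly (k j : ℕ) (s : Multiset ℕ) : Prop :=
  s.count k = j ∧ ∀ b ∈ s, b ≠ k → s.count b = 1

instance (k j : ℕ) : DecidablePred (RepeatsOnly k j) :=
  fun _ => inferInstanceAs (Decidable (_ ∧ _))

lemma repeatsOnly_cons_iff {k j : ℕ} {s : Multiset ℕ} :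
    RepeatsOnly k (j + 1) (k ::ₘ s) ↔ RepeatsOnly k j s := by
  rw [RepeatsOnly, RepeatsOnly, Multiset.count_cons_self, Nat.add_right_cancel_iff]
  refine and_congr_right fun _ => ⟨fun h b hb hbk => ?_, fun h b hb hbk => ?_⟩
  · rw [← Multiset.count_cons_of_ne hbk]
    exact h b (Multiset.mem_cons_of_mem hb) hbk
  · rw [Multiset.count_cons_of_ne hbk]
    exact h b ((Multiset.mem_cons.mp hb).resolve_left hbk) hbk

lemma repeatsOnly_one_iff {k : ℕ} {s : Multiset ℕ} : RepeatsOnly k 1 s ↔ k ∈ s ∧ s.Nodup := by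
  rw [Multiset.nodup_iff_count_eq_one, RepeatsOnly]
  constructor
  · rintro ⟨hk, hs⟩
    refine ⟨Multiset.count_pos.mp (by omega), fun b hb => ?_⟩
    by_cases hbk : b = k
    · rwa [hbk]
    · exact hs b hb hbk
  · rintro ⟨hk, hs⟩
    exact ⟨hs k hk, fun b hb _ => hs b hb⟩

namespace Nat.Partition

lemma card_filter_mem_parts {n a : ℕ} (ha1 : 1 ≤ a) (ha : a ≤ n) (P : Multiset ℕ → Prop)
    [DecidablePred P] :
    #{π : n.Partition | a ∈ π.parts ∧ P π.parts} = #{σ : (n - a).Partition | P (a ::ₘ σ.parts)} := by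
  let e := partitionWithPartEquiv ha1 ha
  refine card_bij' (fun π hπ => e ⟨π, (mem_filter.mp hπ).2.1⟩) (fun σ _ => (e.symm σ).1)
    ?_ ?_ (fun _ _ => by simp) (fun _ _ => by simp)
  · intro π hπ
    obtain ⟨-, hπa, hπP⟩ := mem_filter.mp hπ
    simpa [e, Multiset.cons_erase hπa] using hπP
  · intro σ hσ
    simpa [e] using hσ

lemma card_distincts_filter_mem {n k : ℕ} (hk : 1 ≤ k) (hkn : k ≤ n) :
    #{π ∈ distincts n | k ∈ π.parts} = #{π ∈ distincts (n - k) | k ∉ π.parts} := by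
  simp only [distincts, filter_filter]
  convert card_filter_mem_parts hk hkn Multiset.Nodup using 3 with π _ σ
  · exact and_comm
  · rw [Multiset.nodup_cons, and_comm]

lemma card_odds_filter_mem {n k : ℕ} (hkn : k ≤ n) :
    #{π ∈ odds n | k ∈ π.parts} = if Even k then 0 else #(odds (n - k)) := by
  split_ifs with hk
  · rw [Finset.card_eq_zero, filter_eq_empty_iff]
    intro π hπ hkπ
    exact (mem_filter.mp hπ).2 k hkπ hk
  have hk1 : 1 ≤ k := Nat.one_le_iff_ne_zero.mpr (by rintro rfl; exact hk Even.zero)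
  simp only [odds, restricted, filter_filter]
  convert card_filter_mem_parts hk1 hkn (fun s => ∀ i ∈ s, ¬Even i) using 3 with π _ σ
  · exact and_comm
  · simp only [Multiset.mem_cons, forall_eq_or_imp]
    exact (and_iff_right hk).symm

lemma card_filter_mem_parts_of_lt {n k : ℕ} (s : Finset n.Partition) (h : n < k) :
    #{π ∈ s | k ∈ π.parts} = 0 := by
  rw [Finset.card_eq_zero, filter_eq_empty_iff]
  exact fun π _ hk => absurd (le_of_mem_parts hk) (by omega)

lemma card_distincts_filter_mem_add {n k : ℕ} (hk : 1 ≤ k) (hkn : k ≤ n) :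
    #{π ∈ distincts n | k ∈ π.parts} + #{π ∈ distincts (n - k) | k ∈ π.parts} =
      #(distincts (n - k)) := by
  rw [card_distincts_filter_mem hk hkn, add_comm, card_filter_add_card_filter_not]

lemma card_repeatsOnly_succ {n k : ℕ} (j : ℕ) (hk : 1 ≤ k) (hkn : k ≤ n) :
    #{π : n.Partition | RepeatsOnly k (j + 1) π.parts} =
      #{σ : (n - k).Partition | RepeatsOnly k j σ.parts} := by
  have hmem (π : n.Partition) : RepeatsOnly k (j + 1) π.parts ↔
      k ∈ π.parts ∧ RepeatsOnly k (j + 1) π.parts :=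
    ⟨fun h => ⟨Multiset.count_pos.mp (by rw [h.1]; omega), h⟩, And.right⟩
  rw [filter_congr fun π _ => hmem π, card_filter_mem_parts hk hkn]
  simp_rw [repeatsOnly_cons_iff]

lemma card_repeatsOnly_three {n k : ℕ} (hk : 1 ≤ k) (h : 2 * k ≤ n) :
    #{π : n.Partition | RepeatsOnly k 3 π.parts} =
      #{π ∈ distincts (n - 2 * k) | k ∈ π.parts} := by
  rw [card_repeatsOnly_succ 2 hk (by omega), card_repeatsOnly_succ 1 hk (by omega),
    Nat.sub_sub, ← two_mul]
  simp_rw [repeatsOnly_one_iff, distincts, filter_filter, and_comm]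

lemma card_repeatsOnly_three_of_lt {n k : ℕ} (h : n < 3 * k) :
    #{π : n.Partition | RepeatsOnly k 3 π.parts} = 0 := by
  rw [Finset.card_eq_zero, filter_eq_empty_iff]
  intro π _ hπ
  obtain ⟨u, hu⟩ := Multiset.le_iff_exists_add.mp (Multiset.le_count_iff_replicate_le.mp hπ.1.ge)
  have := congrArg Multiset.sum hu
  simp only [π.parts_sum, Multiset.sum_add, Multiset.sum_replicate, smul_eq_mul] at this
  omega

lemma card_distincts_filter_mem_add_card_repeatsOnly {n k : ℕ} (hk : 1 ≤ k) :
    #{π ∈ distincts (n - k) | k ∈ π.parts} + #{π : n.Partition | RepeatsOnly k 3 π.parts} =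
      if 2 * k ≤ n then #(distincts (n - 2 * k)) else 0 := by
  split_ifs with h
  · rw [card_repeatsOnly_three hk h, two_mul, ← Nat.sub_sub]
    exact card_distincts_filter_mem_add hk (by omega)
  · rw [card_filter_mem_parts_of_lt _ (by omega), card_repeatsOnly_three_of_lt (by omega)]

end Nat.Partition

lemma sum_hookCount_one {n : ℕ} (s : Finset n.Partition) :
    ∑ π ∈ s, hookCount π.parts 1 = ∑ k ∈ Icc 1 n, #{π ∈ s | k ∈ π.parts} := by
  have htoFinset (π : n.Partition) : π.parts.toFinset = {k ∈ Icc 1 n | k ∈ π.parts} := by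
    ext k
    simp only [Multiset.mem_toFinset, mem_filter, mem_Icc]
    exact ⟨fun hk => ⟨⟨π.parts_pos hk, le_of_mem_parts hk⟩, hk⟩, And.right⟩
  calc ∑ π ∈ s, hookCount π.parts 1
      = ∑ π ∈ s, ∑ k ∈ Icc 1 n, if k ∈ π.parts then 1 else 0 := sum_congr rfl fun π _ => by
        rw [hookCount_one fun _ => π.parts_pos, htoFinset, card_filter]
    _ = ∑ k ∈ Icc 1 n, #{π ∈ s | k ∈ π.parts} := by
        rw [sum_comm]
        simp_rw [card_filter]

lemma cBeck_eq_sum (n : ℕ) :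
    cBeck n = ∑ k ∈ Icc 1 n, #{π : n.Partition | RepeatsOnly k 3 π.parts} := by
  rw [cBeck, ← card_biUnion]
  · congr 1
    ext π
    simp only [mem_filter, mem_univ, true_and, mem_biUnion, mem_Icc, Multiset.mem_toFinset]
    constructor
    · rintro ⟨a, ha, h⟩
      exact ⟨a, ⟨π.parts_pos ha, le_of_mem_parts ha⟩, h⟩
    · rintro ⟨a, -, h⟩
      exact ⟨a, Multiset.count_pos.mp (by rw [h.1]; omega), h⟩
  · intro k _ k' _ hne
    simp only [Function.onFun, disjoint_left, mem_filter, mem_univ, true_and]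
    rintro π ⟨hk, -⟩ ⟨-, hk'⟩
    have := hk' k (Multiset.count_pos.mp (by omega)) hne
    omega

lemma sum_Icc_ite_two_mul_le {M : Type*} [AddCommMonoid M] (f : ℕ → M) (n : ℕ) :
    ∑ k ∈ Icc 1 n, (if 2 * k ≤ n then f (2 * k) else 0) =
      ∑ k ∈ Icc 1 n, if Even k then f k else 0 := by
  rw [← sum_filter, ← sum_filter]
  refine sum_nbij' (2 * ·) (· / 2) ?_ ?_ ?_ ?_ fun _ _ => rfl <;>
    simp only [mem_filter, mem_Icc, even_iff_two_dvd, Nat.dvd_iff_mod_eq_zero] <;> omega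

theorem beck_conjecture (n : ℕ) : (b1 n : ℤ) - (a1 n : ℤ) = cBeck n := by
  have hterm : ∀ k ∈ Icc 1 n,
      (#{π ∈ distincts n | k ∈ π.parts} : ℤ) - #{π ∈ odds n | k ∈ π.parts} -
        #{π : n.Partition | RepeatsOnly k 3 π.parts} =
      (if Even k then (#(distincts (n - k)) : ℤ) else 0) -
        (if 2 * k ≤ n then (#(distincts (n - 2 * k)) : ℤ) else 0) := by
    intro k hk
    obtain ⟨hk1, hkn⟩ := mem_Icc.mp hk
    have hwith := card_distincts_filter_mem_add hk1 hkn
    have hrepeats := card_distincts_filter_mem_add_card_repeatsOnly (n := n) hk1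
    have hodds := card_odds_filter_mem hkn
    rw [card_odds_eq_card_distincts] at hodds
    split_ifs at hrepeats hodds ⊢ <;> omega
  rw [← sub_eq_zero, b1, a1, cBeck_eq_sum, sum_hookCount_one, sum_hookCount_one]
  push_cast
  rw [← sum_sub_distrib, ← sum_sub_distrib, sum_congr rfl hterm, sum_sub_distrib,
    sum_Icc_ite_two_mul_le fun j => (#(distincts (n - j)) : ℤ), sub_self]
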